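/- arXiv:2601.02035 — 3 statements merged into one kernel-verified Lean document; each statement's English description precedes it below -/
import Mathlib

section
/- Let N > 0, K ∈ ℝ and r > 0. Let G : [0, r] → ℝ be continuously differentiable with G(0) = 0 and G(t) > 0 for all t ∈ (0, r]. Suppose φ : (0, r] → ℝ is differentiable, satisfies −φ'(t) ≥ (1/N)·φ(t)² + K for every t ∈ (0, r], and lim_{t→0⁺} φ(t)·G(t)² = 0. Then −G(r)²·φ(r) ≥ ∫₀^r ( −N·G'(t)² + K·G(t)² ) dt. -/
open MeasureTheory Set Filter

/-- Integral Riccati comparison inequality: if `G` is `C¹` on `[0,r]` with `G 0 = 0`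
and `G > 0` on `(0,r]`, `φ` is differentiable on `(0,r]` with
`−φ' ≥ (1/N)·φ² + K` there, and `φ(t)·G(t)² → 0` as `t → 0⁺`, then
`−G(r)²·φ(r) ≥ ∫₀^r (−N·G'(t)² + K·G(t)²) dt`. -/
theorem integral_riccati_comparison (N K r : ℝ) (hN : 0 < N) (hr : 0 < r)
    (G φ : ℝ → ℝ)
    (hG : ContDiffOn ℝ 1 G (Icc 0 r))
    (hG0 : G 0 = 0)
    (hGpos : ∀ t ∈ Ioc 0 r, 0 < G t)
    (hφdiff : ∀ t ∈ Ioc 0 r, DifferentiableAt ℝ φ t)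
    (hineq : ∀ t ∈ Ioc 0 r, -(deriv φ t) ≥ (1 / N) * (φ t) ^ 2 + K)
    (hlim : Tendsto (fun t => φ t * (G t) ^ 2) (nhdsWithin 0 (Ioi 0)) (nhds 0)) :
    -(G r) ^ 2 * φ r ≥ ∫ t in (0 : ℝ)..r, (-N * (deriv G t) ^ 2 + K * (G t) ^ 2) := by
  have hicc : UniqueDiffOn ℝ (Icc (0:ℝ) r) := uniqueDiffOn_Icc hr
  set g : ℝ → ℝ := fun t => -N * (derivWithin G (Icc 0 r) t) ^ 2 + K * (G t) ^ 2 with hg_def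
  have hG' : ContinuousOn (derivWithin G (Icc 0 r)) (Icc 0 r) :=
    hG.continuousOn_derivWithin hicc le_rfl
  have hgcont : ContinuousOn g (Icc 0 r) := by
    exact (continuousOn_const.mul (hG'.pow 2)).add
      (continuousOn_const.mul ((hG.continuousOn).pow 2))
  -- G differentiable (with deriv = derivWithin) at interior points
  have hGdiff : ∀ t ∈ Ioo (0:ℝ) r, HasDerivAt G (deriv G t) t := by
    intro t ht
    have hmem : Icc (0:ℝ) r ∈ nhds t := Icc_mem_nhds ht.1 ht.2
    have := ((hG.differentiableOn one_ne_zero) t (Ioo_subset_Icc_self ht)).differentiableAt hmem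
    exact this.hasDerivAt
  have hderiv_eq : ∀ t ∈ Ioo (0:ℝ) r, derivWithin G (Icc 0 r) t = deriv G t := by
    intro t ht
    exact derivWithin_of_mem_nhds (Icc_mem_nhds ht.1 ht.2)
  -- the integrand in the statement equals g a.e. on the interval
  have hint_eq : (∫ t in (0:ℝ)..r, (-N * (deriv G t) ^ 2 + K * (G t) ^ 2))
      = ∫ t in (0:ℝ)..r, g t := by
    apply intervalIntegral.integral_congr_ae
    have : ∀ᵐ t : ℝ, t ≠ r → t ∈ uIoc (0:ℝ) r →
        (-N * (deriv G t) ^ 2 + K * (G t) ^ 2) = g t := by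
      filter_upwards with t htr ht
      rw [uIoc_of_le hr.le] at ht
      have : t ∈ Ioo (0:ℝ) r := ⟨ht.1, lt_of_le_of_ne ht.2 htr⟩
      rw [hg_def]; simp only []
      rw [hderiv_eq t this]
    have h0 : ∀ᵐ t : ℝ, t ≠ r := by
      refine ae_iff.2 ?_
      simpa [Set.setOf_eq_eq_singleton, not_not] using measure_singleton (μ := volume) r
    filter_upwards [h0, this] with t ht h using fun hmem => h ht hmem
  rw [hint_eq]
  have hgi : IntervalIntegrable g volume 0 r := by
    apply ContinuousOn.intervalIntegrable
    rwa [uIcc_of_le hr.le]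
  -- F := -G² φ
  set F : ℝ → ℝ := fun t => -(G t) ^ 2 * φ t with hF_def
  -- key step: for each ε ∈ (0, r], F r - F ε ≥ ∫_ε^r g
  have key : ∀ ε ∈ Ioc (0:ℝ) r, F ε + ∫ t in ε..r, g t ≤ F r := by
    intro ε hε
    set H : ℝ → ℝ := fun t => F t - ∫ s in ε..t, g s with hH_def
    have hsub : Icc ε r ⊆ Ioc 0 r := fun x hx => ⟨lt_of_lt_of_le hε.1 hx.1, hx.2⟩
    have hsub' : Icc ε r ⊆ Icc 0 r := fun x hx => ⟨le_of_lt (hsub hx).1, hx.2⟩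
    have hFcont : ContinuousOn F (Icc ε r) := by
      apply ContinuousOn.mul
      · exact ((hG.continuousOn.mono hsub').pow 2).neg
      · intro x hx
        exact (hφdiff x (hsub hx)).continuousAt.continuousWithinAt
    have hPcont : ContinuousOn (fun t => ∫ s in ε..t, g s) (Icc ε r) := by
      rw [show Icc ε r = uIcc ε r from (uIcc_of_le hε.2).symm]
      apply intervalIntegral.continuousOn_primitive_interval'
      · exact hgi.mono_set (by rw [uIcc_of_le hε.2, uIcc_of_le hr.le]; exact hsub')
      · rw [uIcc_of_le hε.2]; exact left_mem_Icc.2 hε.2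
    have hHmono : MonotoneOn H (Icc ε r) := by
      apply monotoneOn_of_deriv_nonneg (convex_Icc ε r) (hFcont.sub hPcont)
      · -- differentiability on the interior
        rw [interior_Icc]
        intro x hx
        have hx' : x ∈ Ioo (0:ℝ) r := ⟨lt_trans hε.1 hx.1, hx.2⟩
        have hFd : DifferentiableAt ℝ F x := by
          exact ((((hGdiff x hx').differentiableAt.pow 2).neg).mul
            (hφdiff x (hsub (Ioo_subset_Icc_self hx))))
        have hPd : HasDerivAt (fun t => ∫ s in ε..t, g s) (g x) x := by
          apply intervalIntegral.integral_hasDerivAt_right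
          · exact hgi.mono_set (by
              rw [uIcc_of_le hx.1.le, uIcc_of_le hr.le]
              exact fun y hy => ⟨le_trans hε.1.le hy.1, le_trans hy.2 hx.2.le⟩)
          · exact (hgcont.mono Ioo_subset_Icc_self).stronglyMeasurableAtFilter isOpen_Ioo x hx'
          · exact hgcont.continuousAt (Icc_mem_nhds hx'.1 hx'.2)
        exact (hFd.sub hPd.differentiableAt).differentiableWithinAt
      · rw [interior_Icc]
        intro x hx
        have hx' : x ∈ Ioo (0:ℝ) r := ⟨lt_trans hε.1 hx.1, hx.2⟩
        have hxIoc : x ∈ Ioc (0:ℝ) r := Ioo_subset_Ioc_self hx'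
        have hGd : HasDerivAt G (deriv G x) x := hGdiff x hx'
        have hφd : HasDerivAt φ (deriv φ x) x := (hφdiff x hxIoc).hasDerivAt
        have hFd : HasDerivAt F
            (-(2 * G x ^ 1 * deriv G x) * φ x + -(G x) ^ 2 * deriv φ x) x :=
          ((hGd.pow 2).neg.mul hφd).congr_deriv (by simp only [Pi.neg_apply, Pi.pow_apply]; push_cast; ring)
        have hPd : HasDerivAt (fun t => ∫ s in ε..t, g s) (g x) x := by
          apply intervalIntegral.integral_hasDerivAt_right
          · exact hgi.mono_set (by
              rw [uIcc_of_le hx.1.le, uIcc_of_le hr.le]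
              exact fun y hy => ⟨le_trans hε.1.le hy.1, le_trans hy.2 hx.2.le⟩)
          · exact (hgcont.mono Ioo_subset_Icc_self).stronglyMeasurableAtFilter isOpen_Ioo x hx'
          · exact hgcont.continuousAt (Icc_mem_nhds hx'.1 hx'.2)
        have hHd : HasDerivAt H
            ((-(2 * G x ^ 1 * deriv G x) * φ x + -(G x) ^ 2 * deriv φ x) - g x) x :=
          hFd.sub hPd
        rw [show deriv (F - fun t => ∫ s in ε..t, g s) x = deriv H x from rfl, hHd.deriv]
        have hricc := hineq x hxIoc
        have hGx : 0 < G x := hGpos x hxIoc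
        have hGsq : 0 ≤ (G x) ^ 2 := sq_nonneg _
        have h1 : (G x) ^ 2 * ((1 / N) * (φ x) ^ 2 + K) ≤ (G x) ^ 2 * (-(deriv φ x)) :=
          mul_le_mul_of_nonneg_left hricc hGsq
        have hgx : g x = -N * (deriv G x) ^ 2 + K * (G x) ^ 2 := by
          rw [hg_def]; simp only []; rw [hderiv_eq x hx']
        rw [hgx]
        have hsq : 0 ≤ (G x * φ x - N * deriv G x) ^ 2 := sq_nonneg _
        have hN' : (0:ℝ) < N := hN
        have hkey : 0 ≤ (1 / N) * (G x * φ x - N * deriv G x) ^ 2 :=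
          mul_nonneg (by positivity) (sq_nonneg _)
        have hexp : (1 / N) * (G x * φ x - N * deriv G x) ^ 2
            = (1 / N) * ((G x) ^ 2 * (φ x) ^ 2) - 2 * G x * deriv G x * φ x
              + N * (deriv G x) ^ 2 := by
          field_simp
          ring
        rw [hexp] at hkey
        have h1e : (1 / N) * ((G x) ^ 2 * (φ x) ^ 2) + K * (G x) ^ 2
            ≤ (G x) ^ 2 * (-deriv φ x) := by
          calc (1 / N) * ((G x) ^ 2 * (φ x) ^ 2) + K * (G x) ^ 2
              = (G x) ^ 2 * (1 / N * (φ x) ^ 2 + K) := by ring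
            _ ≤ _ := h1
        simp only [pow_one]
        nlinarith [hkey, h1e]
    have := hHmono (left_mem_Icc.2 hε.2) (right_mem_Icc.2 hε.2) hε.2
    rw [hH_def] at this
    simp only [intervalIntegral.integral_same, sub_zero] at this
    linarith
  -- take the limit ε → 0⁺
  have hIocnhds : Ioc (0:ℝ) r ∈ nhdsWithin (0:ℝ) (Ioi 0) := by
    rw [← nhdsWithin_Ioc_eq_nhdsGT hr]
    exact self_mem_nhdsWithin
  have hFlim : Tendsto F (nhdsWithin (0:ℝ) (Ioi 0)) (nhds 0) := by
    have : F = fun t => -(φ t * (G t) ^ 2) := by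
      funext t; rw [hF_def]; ring
    rw [this]
    simpa using hlim.neg
  have hPlim : Tendsto (fun ε => ∫ t in ε..r, g t) (nhdsWithin (0:ℝ) (Ioi 0))
      (nhds (∫ t in (0:ℝ)..r, g t)) := by
    have hc : ContinuousOn (fun x => ∫ t in x..r, g t) (Icc 0 r) := by
      have := intervalIntegral.continuousOn_primitive_interval_left (f := g) (μ := volume) (a := 0) (b := r)
        (by rw [uIcc_of_le hr.le]; exact hgcont.integrableOn_compact isCompact_Icc)
      rwa [uIcc_of_le hr.le] at this
    have := (hc 0 (left_mem_Icc.2 hr.le)).tendsto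
    apply this.mono_left
    rw [← nhdsWithin_Ioc_eq_nhdsGT hr]
    exact nhdsWithin_mono _ Ioc_subset_Icc_self
  have hsum : Tendsto (fun ε => F ε + ∫ t in ε..r, g t) (nhdsWithin (0:ℝ) (Ioi 0))
      (nhds (0 + ∫ t in (0:ℝ)..r, g t)) := hFlim.add hPlim
  rw [zero_add] at hsum
  have hle : (∫ t in (0:ℝ)..r, g t) ≤ F r := by
    apply le_of_tendsto hsum
    filter_upwards [hIocnhds] with ε hε using key ε hε
  exact hle
end

section
/- Let N > 0, K > 0 and set α = √(K/N). Let 0 < r < π/α. Suppose φ : (0, r] → ℝ is differentiable, satisfies −φ'(t) ≥ (1/N)·φ(t)² + K for every t ∈ (0, r], and lim_{t→0⁺} φ(t)·sin²(α t) = 0. Then φ(r) ≤ √(N·K)·cot(α r) = √(N·K)·cos(α r)/sin(α r). -/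
open Set Filter Real

/-- Scalar Riccati comparison, positive curvature case: with `α = √(K/N)` and
`0 < r < π/α`, a differentiable `φ` on `(0,r]` satisfying `−φ' ≥ (1/N)·φ² + K`
with `φ(t)·sin²(αt) → 0` as `t → 0⁺` satisfies
`φ(r) ≤ √(NK)·cos(αr)/sin(αr)`. -/
theorem riccati_comparison_pos_curv (N K r : ℝ) (hN : 0 < N) (hK : 0 < K)
    (α : ℝ) (hα : α = Real.sqrt (K / N))
    (hr : 0 < r) (hrπ : r < π / α)
    (φ : ℝ → ℝ)
    (hφdiff : ∀ t ∈ Ioc 0 r, DifferentiableAt ℝ φ t)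
    (hineq : ∀ t ∈ Ioc 0 r, -(deriv φ t) ≥ (1 / N) * (φ t) ^ 2 + K)
    (hlim : Tendsto (fun t => φ t * (Real.sin (α * t)) ^ 2)
      (nhdsWithin 0 (Ioi 0)) (nhds 0)) :
    φ r ≤ Real.sqrt (N * K) * Real.cos (α * r) / Real.sin (α * r) := by
  have hKN : 0 < K / N := div_pos hK hN
  have hα0 : 0 < α := by rw [hα]; exact Real.sqrt_pos.mpr hKN
  have hα2 : α ^ 2 = K / N := by rw [hα, sq_sqrt hKN.le]
  have hNK : N * α ^ 2 = K := by rw [hα2]; field_simp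
  set s := Real.sqrt (N * K) with hs
  have hNα : N * α = s := by
    rw [hs, hα, show N * K = N ^ 2 * (K / N) by field_simp,
      Real.sqrt_mul (sq_nonneg N), Real.sqrt_sq hN.le]
  have hsα : s * α = K := by nlinarith
  set ψ : ℝ → ℝ := fun t => φ t * Real.sin (α * t) ^ 2 -
    s * (Real.sin (α * t) * Real.cos (α * t)) with hψ
  have hsin' : ∀ t : ℝ, HasDerivAt (fun u => Real.sin (α * u)) (α * Real.cos (α * t)) t := by
    intro t
    have := (Real.hasDerivAt_sin (α * t)).comp t ((hasDerivAt_id t).const_mul α)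
    simpa [mul_comm, Function.comp_def] using this
  have hcos' : ∀ t : ℝ, HasDerivAt (fun u => Real.cos (α * u)) (-(α * Real.sin (α * t))) t := by
    intro t
    have := (Real.hasDerivAt_cos (α * t)).comp t ((hasDerivAt_id t).const_mul α)
    simpa [mul_comm, Function.comp_def] using this
  have hderiv : ∀ t ∈ Ioc 0 r, HasDerivAt ψ
      (deriv φ t * Real.sin (α * t) ^ 2 +
        φ t * (2 * Real.sin (α * t) * (α * Real.cos (α * t))) -
        s * (α * Real.cos (α * t) * Real.cos (α * t) +
          Real.sin (α * t) * -(α * Real.sin (α * t)))) t := by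
    intro t ht
    have h1 := hsin' t
    have h2 := hcos' t
    have hsq : HasDerivAt (fun u => Real.sin (α * u) ^ 2)
        (2 * Real.sin (α * t) * (α * Real.cos (α * t))) t := by
      have := h1.pow 2
      simpa [mul_comm, mul_assoc, mul_left_comm, Pi.pow_def] using this
    have hφ := (hφdiff t ht).hasDerivAt
    exact (hφ.mul hsq).sub (((h1.mul h2)).const_mul s)
  have hnonpos : ∀ t ∈ Ioc 0 r,
      deriv φ t * Real.sin (α * t) ^ 2 +
        φ t * (2 * Real.sin (α * t) * (α * Real.cos (α * t))) -
        s * (α * Real.cos (α * t) * Real.cos (α * t) +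
          Real.sin (α * t) * -(α * Real.sin (α * t))) ≤ 0 := by
    intro t ht
    have hi := hineq t ht
    set S := Real.sin (α * t) with hS
    set C := Real.cos (α * t) with hC
    have hD : φ t ^ 2 + N * K ≤ -(N * deriv φ t) := by
      have h' : (1 / N) * (φ t) ^ 2 + K ≤ -(deriv φ t) := hi
      have h2 := mul_le_mul_of_nonneg_left h' hN.le
      have h3 : N * ((1 / N) * (φ t) ^ 2 + K) = φ t ^ 2 + N * K := by
        field_simp
      rw [h3] at h2
      linarith
    have hs2 : s ^ 2 = N * K := Real.sq_sqrt (by positivity)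
    have hs2C : s ^ 2 * C ^ 2 = N * K * C ^ 2 := by rw [hs2]
    have key : N * (deriv φ t * S ^ 2) + 2 * s * (φ t * S * C)
        - N * K * C ^ 2 + N * K * S ^ 2 ≤ 0 := by
      nlinarith [mul_le_mul_of_nonneg_right hD (sq_nonneg S),
        sq_nonneg (φ t * S - s * C), hs2C]
    have hNE : N * (deriv φ t * S ^ 2 + φ t * (2 * S * (α * C)) -
        s * (α * C * C + S * -(α * S))) =
        N * (deriv φ t * S ^ 2) + 2 * s * (φ t * S * C)
        - N * K * C ^ 2 + N * K * S ^ 2 := by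
      linear_combination (2 * φ t * S * C) * hNα + (S ^ 2 - C ^ 2) * N * hsα
    nlinarith [key, hNE, hN]
  have hcont : ContinuousOn ψ (Ioc 0 r) :=
    fun t ht => ((hderiv t ht).continuousAt).continuousWithinAt
  have hanti : AntitoneOn ψ (Ioc 0 r) := by
    apply antitoneOn_of_deriv_nonpos (convex_Ioc 0 r) hcont
    · intro t ht
      rw [interior_Ioc] at ht
      exact ((hderiv t (Ioo_subset_Ioc_self ht)).differentiableAt).differentiableWithinAt
    · intro t ht
      rw [interior_Ioc] at ht
      rw [(hderiv t (Ioo_subset_Ioc_self ht)).deriv]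
      exact hnonpos t (Ioo_subset_Ioc_self ht)
  -- ψ tends to 0 at 0⁺
  have htend : Tendsto ψ (nhdsWithin 0 (Ioi 0)) (nhds 0) := by
    have h2 : Tendsto (fun t => s * (Real.sin (α * t) * Real.cos (α * t)))
        (nhdsWithin 0 (Ioi 0)) (nhds 0) := by
      have hc : ContinuousAt (fun t : ℝ => s * (Real.sin (α * t) * Real.cos (α * t))) 0 := by
        fun_prop
      exact tendsto_nhdsWithin_of_tendsto_nhds (by simpa using hc.tendsto)
    have := hlim.sub h2
    simpa using this
  have hψr : ψ r ≤ 0 := by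
    refine ge_of_tendsto htend ?_
    have hmem : Ioo (0:ℝ) r ∈ nhdsWithin (0:ℝ) (Ioi 0) := by
      rw [show Ioo (0:ℝ) r = Ioi 0 ∩ Iio r from rfl]
      exact inter_mem_nhdsWithin _ (Iio_mem_nhds hr)
    filter_upwards [hmem] with t ht
    exact hanti ⟨ht.1, ht.2.le⟩ ⟨hr, le_refl r⟩ ht.2.le
  have hsinr : 0 < Real.sin (α * r) := by
    apply Real.sin_pos_of_pos_of_lt_pi (by positivity)
    calc α * r < α * (π / α) := by exact (mul_lt_mul_iff_right₀ hα0).mpr hrπ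
    _ = π := by field_simp
  rw [le_div_iff₀ hsinr]
  have : φ r * Real.sin (α * r) ^ 2 - s * (Real.sin (α * r) * Real.cos (α * r)) ≤ 0 := hψr
  nlinarith [hsinr, this]
end

section
/- Let N > 0, K < 0, set α = √(|K|/N), and let r > 0. Suppose φ : (0, r] → ℝ is differentiable, satisfies −φ'(t) ≥ (1/N)·φ(t)² + K for every t ∈ (0, r], and lim_{t→0⁺} φ(t)·sinh²(α t) = 0. Then φ(r) ≤ √(N·|K|)·coth(α r) = √(N·|K|)·cosh(α r)/sinh(α r). -/
open Set Filter

/-- Scalar Riccati comparison, negative curvature case: with `α = √(|K|/N)`,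
a differentiable `φ` on `(0,r]` satisfying `−φ' ≥ (1/N)·φ² + K` with
`φ(t)·sinh²(αt) → 0` as `t → 0⁺` satisfies
`φ(r) ≤ √(N|K|)·cosh(αr)/sinh(αr)`. -/
theorem riccati_comparison_neg_curv (N K r : ℝ) (hN : 0 < N) (hK : K < 0)
    (α : ℝ) (hα : α = Real.sqrt (|K| / N)) (hr : 0 < r)
    (φ : ℝ → ℝ)
    (hφdiff : ∀ t ∈ Ioc 0 r, DifferentiableAt ℝ φ t)
    (hineq : ∀ t ∈ Ioc 0 r, -(deriv φ t) ≥ (1 / N) * (φ t) ^ 2 + K)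
    (hlim : Tendsto (fun t => φ t * (Real.sinh (α * t)) ^ 2)
      (nhdsWithin 0 (Ioi 0)) (nhds 0)) :
    φ r ≤ Real.sqrt (N * |K|) * Real.cosh (α * r) / Real.sinh (α * r) := by
  have hKabs : |K| = -K := abs_of_neg hK
  have hα0 : 0 < α := by
    rw [hα]
    exact Real.sqrt_pos.mpr (div_pos (by linarith [abs_pos.mpr hK.ne]) hN)
  have hα2 : α ^ 2 = -K / N := by
    rw [hα, sq, Real.mul_self_sqrt (by positivity), hKabs]
  have hNK : N * α ^ 2 = -K := by
    rw [hα2]; field_simp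
  have hNα : Real.sqrt (N * |K|) = N * α := by
    rw [hα, hKabs, show N * -K = N ^ 2 * (-K / N) by field_simp,
      Real.sqrt_mul (sq_nonneg N), Real.sqrt_sq hN.le]
  set h : ℝ → ℝ := fun t =>
    φ t * (Real.sinh (α * t)) ^ 2 - N * α * (Real.sinh (α * t) * Real.cosh (α * t)) with hh
  -- derivative facts
  have hlin : ∀ t : ℝ, HasDerivAt (fun y => α * y) α t := by
    intro t; simpa using (hasDerivAt_id t).const_mul α
  have hD : ∀ t ∈ Ioc (0:ℝ) r, HasDerivAt h
      (deriv φ t * (Real.sinh (α * t)) ^ 2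
        + φ t * (2 * (Real.sinh (α * t)) ^ 1 * (Real.cosh (α * t) * α))
        - N * α * ((Real.cosh (α * t) * α) * Real.cosh (α * t)
            + Real.sinh (α * t) * (Real.sinh (α * t) * α))) t := by
    intro t ht
    have hφ' : HasDerivAt φ (deriv φ t) t := (hφdiff t ht).hasDerivAt
    have hsin := (hlin t).sinh
    have hcos := (hlin t).cosh
    exact (hφ'.mul (hsin.pow 2)).sub ((hsin.mul hcos).const_mul (N * α))
  have hDle : ∀ t ∈ Ioc (0:ℝ) r,
      deriv φ t * (Real.sinh (α * t)) ^ 2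
        + φ t * (2 * (Real.sinh (α * t)) ^ 1 * (Real.cosh (α * t) * α))
        - N * α * ((Real.cosh (α * t) * α) * Real.cosh (α * t)
            + Real.sinh (α * t) * (Real.sinh (α * t) * α)) ≤ 0 := by
    intro t ht
    set s := Real.sinh (α * t)
    set c := Real.cosh (α * t)
    have h1 : deriv φ t ≤ -((1 / N) * (φ t) ^ 2 + K) := by linarith [hineq t ht]
    have h2 : deriv φ t * s ^ 2 ≤ -((1 / N) * (φ t) ^ 2 + K) * s ^ 2 :=
      mul_le_mul_of_nonneg_right h1 (sq_nonneg s)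
    have h4 : N * (1 / N) = (1:ℝ) := mul_one_div_cancel hN.ne'
    have key : N * (-((1 / N) * (φ t) ^ 2 + K) * s ^ 2)
        = (-((φ t) ^ 2) - N * K) * s ^ 2 := by
      linear_combination (-((φ t) ^ 2 * s ^ 2)) * h4
    have h3 : N * (deriv φ t * s ^ 2) ≤ (-((φ t) ^ 2) - N * K) * s ^ 2 := by
      calc N * (deriv φ t * s ^ 2) ≤ N * (-((1 / N) * (φ t) ^ 2 + K) * s ^ 2) :=
            mul_le_mul_of_nonneg_left h2 hN.le
        _ = (-((φ t) ^ 2) - N * K) * s ^ 2 := key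
    simp only [pow_one]
    have e4 : N * (N * α ^ 2) * s ^ 2 = -(N * K) * s ^ 2 := by
      linear_combination (N * s ^ 2) * hNK
    have hNexpr : N * (deriv φ t * s ^ 2 + φ t * (2 * s * (c * α))
        - N * α * (c * α * c + s * (s * α))) ≤ 0 := by
      nlinarith [h3, sq_nonneg (φ t * s - N * α * c), e4]
    exact le_of_not_gt fun hc => absurd hNexpr (not_le.mpr (mul_pos hN hc))
  -- limit of h at 0⁺
  have hm : Tendsto (fun t => N * α * (Real.sinh (α * t) * Real.cosh (α * t)))
      (nhdsWithin 0 (Ioi 0)) (nhds 0) := by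
    have hc : Continuous (fun t : ℝ => N * α * (Real.sinh (α * t) * Real.cosh (α * t))) := by
      fun_prop
    have h2 : Tendsto (fun t : ℝ => N * α * (Real.sinh (α * t) * Real.cosh (α * t)))
        (nhdsWithin 0 (Ioi 0)) (nhds (N * α * (Real.sinh (α * 0) * Real.cosh (α * 0)))) :=
      (hc.tendsto 0).mono_left nhdsWithin_le_nhds
    simpa using h2
  have hlimh : Tendsto h (nhdsWithin 0 (Ioi 0)) (nhds 0) := by
    simpa using hlim.sub hm
  -- h r ≤ h ε for small ε
  have hkey : ∀ ε ∈ Ioo (0:ℝ) r, h r ≤ h ε := by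
    intro ε hε
    have hanti : AntitoneOn h (Icc ε r) := by
      have hsub : Icc ε r ⊆ Ioc 0 r := fun t ht => ⟨lt_of_lt_of_le hε.1 ht.1, ht.2⟩
      have hφc : ContinuousOn φ (Icc ε r) := fun t ht =>
        ((hφdiff t (hsub ht)).continuousAt).continuousWithinAt
      apply antitoneOn_of_deriv_nonpos (convex_Icc ε r)
      · apply ContinuousOn.sub
        · exact hφc.mul
            ((by fun_prop : Continuous fun t => (Real.sinh (α * t)) ^ 2).continuousOn)
        · exact (by fun_prop :
            Continuous fun t => N * α * (Real.sinh (α * t) * Real.cosh (α * t))).continuousOn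
      · intro t ht
        rw [interior_Icc] at ht
        exact (hD t (hsub ⟨ht.1.le, ht.2.le⟩)).differentiableAt.differentiableWithinAt
      · intro t ht
        rw [interior_Icc] at ht
        have ht' : t ∈ Ioc (0:ℝ) r := ⟨lt_trans hε.1 ht.1, ht.2.le⟩
        rw [(hD t ht').deriv]
        exact hDle t ht'
    exact hanti ⟨le_rfl, hε.2.le⟩ ⟨hε.2.le, le_rfl⟩ hε.2.le
  have hhr : h r ≤ 0 := by
    refine ge_of_tendsto hlimh ?_
    filter_upwards [Ioo_mem_nhdsGT_of_mem (by constructor <;> simp [hr] : (0:ℝ) ∈ Ico 0 r)]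
      with ε hε using hkey ε hε
  have hs : 0 < Real.sinh (α * r) := Real.sinh_pos_iff.mpr (mul_pos hα0 hr)
  rw [hNα, le_div_iff₀ hs]
  have : φ r * (Real.sinh (α * r)) ^ 2
      ≤ N * α * (Real.sinh (α * r) * Real.cosh (α * r)) := by
    have := hhr; simp only [hh] at this; linarith
  nlinarith [hs, this]
end
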